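/- arXiv:1702.07448 — 2 statements merged into one kernel-verified Lean document; each statement's English description precedes it below -/
import Mathlib

section
/- Suppose the eigenvalues of real symmetric $p \times p$ matrices $X$ and $Y$ all lie in $[\tau_1, \tau_2]$ for constants $0 < \tau_1 < \tau_2$, and let $\varphi$ be twice continuously differentiable on an open interval containing $[\tau_1,\tau_2]$ with $M_L \le \varphi'' \le M_U$ there for constants $0 < M_L \le M_U$. Then the Bregman divergence $D_\phi(X,Y) = \phi(X) - \phi(Y) - \mathrm{tr}[(\nabla\phi(Y))^T(X-Y)]$ with $\phi(X) = \sum_{i=1}^p \varphi(\lambda_i(X))$ satisfies $c_1\|X-Y\|_F^2 \le D_\phi(X,Y) \le c_2\|X-Y\|_F^2$ for positive constants $c_1 < c_2$ depending only on $\tau_1, \tau_2, M_L, M_U$. -/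
open Matrix

private lemma sum4_stmt12 {M : Type*} [AddCommMonoid M] {α : Type*} [Fintype α]
    (F : α → α → α → α → M) :
    ∑ k, ∑ l, ∑ m, ∑ i, F k l m i = ∑ q : α × α × α × α, F q.1 q.2.1 q.2.2.1 q.2.2.2 := by
  rw [Fintype.sum_prod_type]
  refine Finset.sum_congr rfl fun k _ => ?_
  rw [Fintype.sum_prod_type]
  refine Finset.sum_congr rfl fun l _ => ?_
  rw [Fintype.sum_prod_type]

private lemma trace_conj_stmt12 (p : ℕ) (V U : Matrix (Fin p) (Fin p) ℝ) (a b : Fin p → ℝ) :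
    ((V * Matrix.diagonal a * Vᵀ) * (U * Matrix.diagonal b * Uᵀ)).trace
      = ∑ i, ∑ j, a i * b j * ((Vᵀ * U) i j)^2 := by
  simp only [Matrix.trace, Matrix.diag, Matrix.mul_apply, Matrix.transpose_apply,
    Matrix.diagonal_apply, ite_mul, zero_mul, mul_ite, mul_zero,
    Finset.sum_ite_eq, Finset.sum_ite_eq', Finset.mem_univ, if_true,
    Finset.sum_mul, Finset.mul_sum, pow_two]
  rw [sum4_stmt12, sum4_stmt12]
  have hinv : Function.Involutive
      (fun q : Fin p × Fin p × Fin p × Fin p => (q.2.2.2, q.2.2.1, q.2.1, q.1)) :=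
    fun q => rfl
  refine Fintype.sum_bijective _ hinv.bijective _ _ fun q => ?_
  obtain ⟨k, l, m, i⟩ := q
  simp only
  ring

private lemma breg_lower_stmt12 (φ : ℝ → ℝ) (a b τ1 τ2 c : ℝ) (ha : a < τ1) (hb : τ2 < b)
    (hs : ContDiffOn ℝ 2 φ (Set.Ioo a b))
    (hc : ∀ t ∈ Set.Icc τ1 τ2, c ≤ deriv (deriv φ) t) :
    ∀ x ∈ Set.Icc τ1 τ2, ∀ y ∈ Set.Icc τ1 τ2,
      φ y + deriv φ y * (x - y) + c / 2 * (x - y) ^ 2 ≤ φ x := by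
  have hsub : Set.Icc τ1 τ2 ⊆ Set.Ioo a b := fun t ht =>
    ⟨lt_of_lt_of_le ha ht.1, lt_of_le_of_lt ht.2 hb⟩
  have hopen : IsOpen (Set.Ioo a b) := isOpen_Ioo
  have hnhds : ∀ t ∈ Set.Ioo a b, Set.Ioo a b ∈ nhds t := fun t ht =>
    hopen.mem_nhds ht
  have hφd : ∀ t ∈ Set.Ioo a b, DifferentiableAt ℝ φ t := fun t ht =>
    ((hs.contDiffAt (hnhds t ht)).differentiableAt (by norm_num))
  have hφ' : ContDiffOn ℝ 1 (deriv φ) (Set.Ioo a b) :=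
    (hs.deriv_of_isOpen hopen (m := 1) (by norm_num))
  have hφ'd : ∀ t ∈ Set.Ioo a b, DifferentiableAt ℝ (deriv φ) t := fun t ht =>
    ((hφ'.contDiffAt (hnhds t ht)).differentiableAt (by norm_num))
  set g : ℝ → ℝ := fun t => φ t - c / 2 * t ^ 2 with hg
  have hgd : ∀ t ∈ Set.Ioo a b, DifferentiableAt ℝ g t := fun t ht =>
    (hφd t ht).sub (by fun_prop)
  have hg'eq : ∀ t ∈ Set.Ioo a b, deriv g t = deriv φ t - c * t := by
    intro t ht
    rw [hg, deriv_fun_sub (hφd t ht) (by fun_prop)]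
    have : deriv (fun t : ℝ => c / 2 * t ^ 2) t = c * t := by
      rw [deriv_const_mul _ (by fun_prop)]
      simp [deriv_pow]
      ring
    rw [this]
  have hg'ev : ∀ t ∈ Set.Ioo a b, deriv g =ᶠ[nhds t] fun s => deriv φ s - c * s := by
    intro t ht
    filter_upwards [hnhds t ht] with s hs using hg'eq s hs
  have hconv : ConvexOn ℝ (Set.Icc τ1 τ2) g := by
    apply convexOn_of_deriv2_nonneg (convex_Icc τ1 τ2)
    · exact ((hs.continuousOn.mono hsub).sub (by fun_prop))
    · intro t ht
      rw [interior_Icc] at ht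
      exact (hgd t (hsub (Set.Ioo_subset_Icc_self ht))).differentiableWithinAt
    · intro t ht
      rw [interior_Icc] at ht
      have ht' := hsub (Set.Ioo_subset_Icc_self ht)
      have : DifferentiableAt ℝ (fun s => deriv φ s - c * s) t :=
        (hφ'd t ht').sub (by fun_prop)
      exact (((hg'ev t ht').differentiableAt_iff).mpr this).differentiableWithinAt
    · intro t ht
      rw [interior_Icc] at ht
      have htIcc : t ∈ Set.Icc τ1 τ2 := Set.Ioo_subset_Icc_self ht
      have ht' := hsub htIcc
      have h2 : deriv (deriv g) t = deriv (deriv φ) t - c := by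
        rw [Filter.EventuallyEq.deriv_eq (hg'ev t ht'),
          deriv_fun_sub (hφ'd t ht') (by fun_prop)]
        have : deriv (fun s : ℝ => c * s) t = c := by
          rw [deriv_const_mul _ differentiableAt_fun_id]
          simp
        rw [this]
      simp only [Function.iterate_succ, Function.iterate_zero, Function.comp_apply, id_eq]
      rw [h2]
      linarith [hc t htIcc]
  intro x hx y hy
  have key : g y + deriv g y * (x - y) ≤ g x := by
    rcases lt_trichotomy x y with h | h | h
    · have := hconv.slope_le_deriv hx hy h (hgd y (hsub hy))
      rw [slope_def_field] at this
      have hxy : 0 < y - x := by linarith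
      rw [div_le_iff₀ hxy] at this
      nlinarith
    · subst h; simp
    · have := hconv.deriv_le_slope hy hx h (hgd y (hsub hy))
      rw [slope_def_field] at this
      have hxy : 0 < x - y := by linarith
      rw [le_div_iff₀ hxy] at this
      nlinarith
  have hgy := hg'eq y (hsub hy)
  rw [hgy] at key
  simp only [hg] at key
  nlinarith [key]

/-- Lemma (equivalence of Bregman divergence and squared Frobenius norm): if all
eigenvalues of symmetric `X = U diag(e) Uᵀ` and `Y = V diag(d) Vᵀ` lie in `[τ₁, τ₂]`
and `φ` is C² near `[τ₁,τ₂]` with `M_L ≤ φ'' ≤ M_U` there, then the Bregman divergence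
`D_φ(X,Y) = ∑ φ(eᵢ) - ∑ φ(dᵢ) - tr(∇φ(Y)ᵀ (X - Y))`, with
`∇φ(Y) = V diag(φ'(dᵢ)) Vᵀ`, is comparable to `‖X - Y‖_F²` with constants depending
only on `τ₁, τ₂, M_L, M_U`. -/
theorem stmt12 (p : ℕ) (τ1 τ2 ML MU : ℝ) (hτ1 : 0 < τ1) (hτ12 : τ1 < τ2)
    (hML : 0 < ML) (hMLU : ML ≤ MU)
    (φ : ℝ → ℝ) (a b : ℝ) (ha : a < τ1) (hb : τ2 < b)
    (hsmooth : ContDiffOn ℝ 2 φ (Set.Ioo a b))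
    (hφ'' : ∀ x ∈ Set.Icc τ1 τ2, ML ≤ deriv (deriv φ) x ∧ deriv (deriv φ) x ≤ MU) :
    ∃ c1 c2 : ℝ, 0 < c1 ∧ c1 < c2 ∧
      ∀ (X Y U V : Matrix (Fin p) (Fin p) ℝ) (e d : Fin p → ℝ),
        U * Uᵀ = 1 → V * Vᵀ = 1 →
        X = U * Matrix.diagonal e * Uᵀ → Y = V * Matrix.diagonal d * Vᵀ →
        (∀ i, e i ∈ Set.Icc τ1 τ2) → (∀ i, d i ∈ Set.Icc τ1 τ2) →
        c1 * (∑ i, ∑ j, (X i j - Y i j) ^ 2) ≤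
            (∑ i, φ (e i)) - (∑ i, φ (d i)) -
              ((V * Matrix.diagonal (fun i => deriv φ (d i)) * Vᵀ)ᵀ * (X - Y)).trace ∧
          (∑ i, φ (e i)) - (∑ i, φ (d i)) -
              ((V * Matrix.diagonal (fun i => deriv φ (d i)) * Vᵀ)ᵀ * (X - Y)).trace ≤
            c2 * (∑ i, ∑ j, (X i j - Y i j) ^ 2) := by
  -- scalar two-sided Taylor bounds
  have hlow := breg_lower_stmt12 φ a b τ1 τ2 ML ha hb hsmooth (fun t ht => (hφ'' t ht).1)
  have hup : ∀ x ∈ Set.Icc τ1 τ2, ∀ y ∈ Set.Icc τ1 τ2,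
      φ x - φ y - deriv φ y * (x - y) ≤ MU / 2 * (x - y) ^ 2 := by
    have hnegd : (deriv fun t => -φ t) = fun s => -deriv φ s := funext fun s => deriv.neg
    have hneg := breg_lower_stmt12 (fun t => -φ t) a b τ1 τ2 (-MU) ha hb hsmooth.neg ?_
    · intro x hx y hy
      have := hneg x hx y hy
      rw [hnegd] at this
      simp only at this
      nlinarith [this]
    · intro t ht
      rw [hnegd]
      have : deriv (fun s => -deriv φ s) t = -deriv (deriv φ) t := deriv.neg
      rw [this]
      linarith [(hφ'' t ht).2]
  refine ⟨ML / 2, MU, by linarith, by linarith, ?_⟩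
  intro X Y U V e d hU hV hX hY he hd
  subst hX hY
  set Q : Matrix (Fin p) (Fin p) ℝ := Vᵀ * U with hQdef
  have hUt : Uᵀ * U = 1 := mul_eq_one_comm.mp hU
  have hVt : Vᵀ * V = 1 := mul_eq_one_comm.mp hV
  have hQQ : Q * Qᵀ = 1 := by
    rw [hQdef, Matrix.transpose_mul, Matrix.transpose_transpose]
    calc Vᵀ * U * (Uᵀ * V) = Vᵀ * (U * Uᵀ) * V := by
          rw [Matrix.mul_assoc, Matrix.mul_assoc, Matrix.mul_assoc]
      _ = 1 := by rw [hU, Matrix.mul_one, hVt]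
  have hQtQ : Qᵀ * Q = 1 := by
    rw [hQdef, Matrix.transpose_mul, Matrix.transpose_transpose]
    calc Uᵀ * V * (Vᵀ * U) = Uᵀ * (V * Vᵀ) * U := by
          rw [Matrix.mul_assoc, Matrix.mul_assoc, Matrix.mul_assoc]
      _ = 1 := by rw [hV, Matrix.mul_one, hUt]
  have hrow : ∀ i, ∑ j, (Q i j) ^ 2 = 1 := by
    intro i
    have h := Matrix.ext_iff.2 hQQ i i
    rw [Matrix.mul_apply] at h
    simp only [Matrix.transpose_apply, Matrix.one_apply_eq] at h
    simpa [pow_two] using h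
  have hcol : ∀ j, ∑ i, (Q i j) ^ 2 = 1 := by
    intro j
    have h := Matrix.ext_iff.2 hQtQ j j
    rw [Matrix.mul_apply] at h
    simp only [Matrix.transpose_apply, Matrix.one_apply_eq] at h
    simpa [pow_two] using h
  -- collapse of trace_conj when the conjugating matrices coincide
  have hcollapse : ∀ (W : Matrix (Fin p) (Fin p) ℝ), Wᵀ * W = 1 →
      ∀ (x y : Fin p → ℝ), (∑ i, ∑ j, x i * y j * ((Wᵀ * W) i j) ^ 2) = ∑ i, x i * y i := by
    intro W hW x y
    rw [hW]
    simp [Matrix.one_apply, ite_pow, Finset.sum_ite_eq']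
  -- symmetry of ∇φ(Y)
  have hGsym : (V * Matrix.diagonal (fun i => deriv φ (d i)) * Vᵀ)ᵀ
      = V * Matrix.diagonal (fun i => deriv φ (d i)) * Vᵀ := by
    rw [Matrix.transpose_mul, Matrix.transpose_mul, Matrix.transpose_transpose,
      Matrix.diagonal_transpose, Matrix.mul_assoc]
  -- the Bregman divergence as a weighted sum
  have htr1 : ((V * Matrix.diagonal (fun i => deriv φ (d i)) * Vᵀ) *
      (U * Matrix.diagonal e * Uᵀ)).trace
      = ∑ i, ∑ j, deriv φ (d i) * e j * (Q i j) ^ 2 :=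
    trace_conj_stmt12 p V U _ e
  have htr2 : ((V * Matrix.diagonal (fun i => deriv φ (d i)) * Vᵀ) *
      (V * Matrix.diagonal d * Vᵀ)).trace = ∑ i, deriv φ (d i) * d i := by
    rw [trace_conj_stmt12 p V V _ d, hcollapse V hVt]
  have htrXX : ((U * Matrix.diagonal e * Uᵀ) * (U * Matrix.diagonal e * Uᵀ)).trace
      = ∑ i, e i * e i := by
    rw [trace_conj_stmt12 p U U e e, hcollapse U hUt]
  have htrYY : ((V * Matrix.diagonal d * Vᵀ) * (V * Matrix.diagonal d * Vᵀ)).trace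
      = ∑ i, d i * d i := by
    rw [trace_conj_stmt12 p V V d d, hcollapse V hVt]
  have htrYX : ((V * Matrix.diagonal d * Vᵀ) * (U * Matrix.diagonal e * Uᵀ)).trace
      = ∑ i, ∑ j, d i * e j * (Q i j) ^ 2 :=
    trace_conj_stmt12 p V U d e
  set X := U * Matrix.diagonal e * Uᵀ with hXdef
  set Y := V * Matrix.diagonal d * Vᵀ with hYdef
  have hXs : Xᵀ = X := by
    rw [hXdef, Matrix.transpose_mul, Matrix.transpose_mul, Matrix.transpose_transpose,
      Matrix.diagonal_transpose, Matrix.mul_assoc]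
  have hYs : Yᵀ = Y := by
    rw [hYdef, Matrix.transpose_mul, Matrix.transpose_mul, Matrix.transpose_transpose,
      Matrix.diagonal_transpose, Matrix.mul_assoc]
  -- Frobenius norm identity
  have hfrob : (∑ i, ∑ j, (X i j - Y i j) ^ 2)
      = ∑ i, e i * e i + ∑ i, d i * d i - 2 * ∑ i, ∑ j, d i * e j * (Q i j) ^ 2 := by
    have h1 : (∑ i, ∑ j, (X i j - Y i j) ^ 2) = ((X - Y)ᵀ * (X - Y)).trace := by
      rw [Matrix.trace]
      rw [Finset.sum_comm]
      refine Finset.sum_congr rfl fun j _ => ?_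
      simp [Matrix.diag, Matrix.mul_apply, Matrix.transpose_apply, Matrix.sub_apply, pow_two]
    rw [h1, Matrix.transpose_sub, hXs, hYs, Matrix.sub_mul, Matrix.mul_sub, Matrix.mul_sub,
      Matrix.trace_sub, Matrix.trace_sub, Matrix.trace_sub, htrXX, htrYY, htrYX]
    have hXY : (X * Y).trace = (Y * X).trace := Matrix.trace_mul_comm X Y
    rw [hXY, htrYX]
    ring
  have hfrob2 : (∑ i, ∑ j, (X i j - Y i j) ^ 2)
      = ∑ i, ∑ j, (Q i j) ^ 2 * (e j - d i) ^ 2 := by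
    rw [hfrob]
    have hexp : ∀ i j : Fin p, (Q i j) ^ 2 * (e j - d i) ^ 2
        = e j * e j * (Q i j) ^ 2 + d i * d i * (Q i j) ^ 2
          - 2 * (d i * e j * (Q i j) ^ 2) := by intro i j; ring
    simp_rw [hexp]
    rw [Finset.sum_congr rfl (fun i _ => Finset.sum_sub_distrib _ _),
      Finset.sum_sub_distrib,
      Finset.sum_congr rfl (fun i _ => Finset.sum_add_distrib),
      Finset.sum_add_distrib]
    have hA : ∑ i, ∑ j, e j * e j * (Q i j) ^ 2 = ∑ i, e i * e i := by
      rw [Finset.sum_comm]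
      refine Finset.sum_congr rfl fun j _ => ?_
      rw [← Finset.mul_sum, hcol j, mul_one]
    have hB : ∑ i, ∑ j, d i * d i * (Q i j) ^ 2 = ∑ i, d i * d i := by
      refine Finset.sum_congr rfl fun i _ => ?_
      rw [← Finset.mul_sum, hrow i, mul_one]
    have hC : ∑ i, ∑ j, 2 * (d i * e j * (Q i j) ^ 2)
        = 2 * ∑ i, ∑ j, d i * e j * (Q i j) ^ 2 := by
      rw [Finset.mul_sum]
      exact Finset.sum_congr rfl fun i _ => by rw [Finset.mul_sum]
    rw [hA, hB, hC]
  -- Bregman divergence identity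
  have hbreg : (∑ i, φ (e i)) - (∑ i, φ (d i)) -
      ((V * Matrix.diagonal (fun i => deriv φ (d i)) * Vᵀ)ᵀ * (X - Y)).trace
      = ∑ i, ∑ j, (Q i j) ^ 2 * (φ (e j) - φ (d i) - deriv φ (d i) * (e j - d i)) := by
    rw [hGsym, Matrix.mul_sub, Matrix.trace_sub, htr1, htr2]
    have hexp : ∀ i j : Fin p, (Q i j) ^ 2 * (φ (e j) - φ (d i) - deriv φ (d i) * (e j - d i))
        = φ (e j) * (Q i j) ^ 2 - φ (d i) * (Q i j) ^ 2
          - (deriv φ (d i) * e j * (Q i j) ^ 2 - deriv φ (d i) * d i * (Q i j) ^ 2) := by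
      intro i j; ring
    simp_rw [hexp]
    rw [Finset.sum_congr rfl (fun i _ => Finset.sum_sub_distrib _ _),
      Finset.sum_sub_distrib,
      Finset.sum_congr rfl (fun i _ => Finset.sum_sub_distrib _ _),
      Finset.sum_sub_distrib,
      Finset.sum_congr rfl (fun i (_ : i ∈ Finset.univ) =>
        (Finset.sum_sub_distrib _ _ :
          ∑ j, (deriv φ (d i) * e j * (Q i j) ^ 2 - deriv φ (d i) * d i * (Q i j) ^ 2) = _)),
      Finset.sum_sub_distrib]
    have hA : ∑ i, ∑ j, φ (e j) * (Q i j) ^ 2 = ∑ i, φ (e i) := by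
      rw [Finset.sum_comm]
      refine Finset.sum_congr rfl fun j _ => ?_
      rw [← Finset.mul_sum, hcol j, mul_one]
    have hB : ∑ i, ∑ j, φ (d i) * (Q i j) ^ 2 = ∑ i, φ (d i) := by
      refine Finset.sum_congr rfl fun i _ => ?_
      rw [← Finset.mul_sum, hrow i, mul_one]
    have hD : ∑ i, ∑ j, deriv φ (d i) * d i * (Q i j) ^ 2 = ∑ i, deriv φ (d i) * d i := by
      refine Finset.sum_congr rfl fun i _ => ?_
      rw [← Finset.mul_sum, hrow i, mul_one]
    rw [hA, hB, hD]
  rw [hbreg, hfrob2]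
  constructor
  · rw [Finset.mul_sum]
    refine Finset.sum_le_sum fun i _ => ?_
    rw [Finset.mul_sum]
    refine Finset.sum_le_sum fun j _ => ?_
    have hs := hlow (e j) (he j) (d i) (hd i)
    nlinarith [sq_nonneg (Q i j), sq_nonneg (e j - d i)]
  · rw [Finset.mul_sum]
    refine Finset.sum_le_sum fun i _ => ?_
    rw [Finset.mul_sum]
    refine Finset.sum_le_sum fun j _ => ?_
    have hs := hup (e j) (he j) (d i) (hd i)
    nlinarith [mul_le_mul_of_nonneg_left hs (sq_nonneg (Q i j)),
      mul_nonneg (sq_nonneg (Q i j)) (sq_nonneg (e j - d i)), hML]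
end

section
/- For the digamma function $\psi$ and integers $0 \le k \le p-1 < n$, the telescoping identity $\psi(x+1) - \psi(x) = 1/x$ implies $\sum_{k=0}^{p-1}\left[\psi\left(\frac{n+\nu-k}{2}\right) - \psi\left(\frac{n-k}{2}\right)\right] \le \sum_{k=0}^{p-1} \log\left(1 + \frac{\nu+2}{n-k-2}\right) \le p\log\left(1 + \frac{\nu+2}{n-p-2}\right)$ for any $\nu \ge 0$ with $n - p - 2 > 0$. -/
open Finset

section Aux

open Real Set

private lemma psi_diff (x : ℝ) (hx : 0 < x) :
    DifferentiableAt ℝ (fun y => Real.log (Real.Gamma y)) x := by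
  refine ((differentiableAt_Gamma ?_).log (Gamma_ne_zero ?_)) <;>
    exact fun m ↦ ne_of_gt (by have := Nat.cast_nonneg (α := ℝ) m; linarith)

private lemma psi_mono {x y : ℝ} (hx : 0 < x) (hxy : x ≤ y) :
    deriv (fun y => Real.log (Real.Gamma y)) x ≤
      deriv (fun y => Real.log (Real.Gamma y)) y := by
  have hc : ConvexOn ℝ (Ioi 0) (fun y => Real.log (Real.Gamma y)) := by
    simpa [Function.comp_def] using convexOn_log_Gamma
  exact hc.monotoneOn_deriv (fun z hz => psi_diff z hz) (mem_Ioi.mpr hx)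
    (mem_Ioi.mpr (hx.trans_le hxy)) hxy

private lemma psi_rec (x : ℝ) (hx : 0 < x) :
    deriv (fun y => Real.log (Real.Gamma y)) (x + 1) =
      deriv (fun y => Real.log (Real.Gamma y)) x + 1 / x := by
  have h_rec : ∀ y : ℝ, 0 < y →
      Real.log (Real.Gamma (y + 1)) = Real.log (Real.Gamma y) + Real.log y := by
    intro y hy
    rw [Gamma_add_one hy.ne', Real.log_mul hy.ne' (Gamma_pos_of_pos hy).ne', add_comm]
  rw [← deriv_comp_add_const, one_div, ← Real.deriv_log,
    ← deriv_add (psi_diff x hx) (Real.differentiableAt_log hx.ne')]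
  apply Filter.EventuallyEq.deriv_eq
  filter_upwards [eventually_gt_nhds hx] using h_rec

/-- telescoping sum bound: `∑_{j<m} 1/(a+j) ≤ log (a-1+m) - log (a-1)` for `a > 1`. -/
private lemma sum_inv_le (a : ℝ) (ha : 1 < a) (m : ℕ) :
    ∑ j ∈ Finset.range m, 1 / (a + j) ≤ Real.log (a - 1 + m) - Real.log (a - 1) := by
  induction m with
  | zero => simp
  | succ m ih =>
    rw [Finset.sum_range_succ]
    have hm0 : (0:ℝ) ≤ m := Nat.cast_nonneg m
    have h1 : (0:ℝ) < a - 1 + m := by linarith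
    have h2 : (0:ℝ) < a + m := by linarith
    have key : 1 / (a + m) ≤ Real.log (a - 1 + (m + 1)) - Real.log (a - 1 + m) := by
      have hl : Real.log ((a - 1 + m) / (a + m)) ≤ (a - 1 + m) / (a + m) - 1 :=
        Real.log_le_sub_one_of_pos (by positivity)
      rw [Real.log_div h1.ne' h2.ne'] at hl
      have : (a - 1 + m) / (a + m) - 1 = -(1 / (a + m)) := by field_simp; ring
      rw [this] at hl
      have : a - 1 + (↑m + 1) = a + m := by ring
      rw [this]
      linarith
    push_cast
    linarith

/-- per-term bound. -/
private lemma term_bound (a ν : ℝ) (ha : 1 < a) (hν : 0 ≤ ν) :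
    deriv (fun y => Real.log (Real.Gamma y)) (a + ν / 2) -
      deriv (fun y => Real.log (Real.Gamma y)) a ≤
    Real.log (a + ν / 2) - Real.log (a - 1) := by
  set m : ℕ := ⌈ν / 2⌉₊ with hm
  have ha0 : (0:ℝ) < a := by linarith
  have hmge : ν / 2 ≤ m := Nat.le_ceil _
  have hmle : (m : ℝ) ≤ ν / 2 + 1 := le_of_lt (Nat.ceil_lt_add_one (by linarith))
  have tele : deriv (fun y => Real.log (Real.Gamma y)) (a + m) -
      deriv (fun y => Real.log (Real.Gamma y)) a = ∑ j ∈ Finset.range m, 1 / (a + j) := by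
    induction m with
    | zero => simp
    | succ k ih =>
      have hk0 : (0:ℝ) ≤ k := Nat.cast_nonneg k
      rw [Finset.sum_range_succ, ← ih]
      push_cast
      rw [show a + ((k:ℝ) + 1) = (a + (k:ℝ)) + 1 by ring, psi_rec (a + (k:ℝ)) (by linarith)]
      ring
  have h1 : deriv (fun y => Real.log (Real.Gamma y)) (a + ν / 2) ≤
      deriv (fun y => Real.log (Real.Gamma y)) (a + m) :=
    psi_mono (by linarith) (by linarith)
  have h2 := sum_inv_le a ha m
  have h3 : Real.log (a - 1 + m) ≤ Real.log (a + ν / 2) :=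
    Real.log_le_log (by have hm0 : (0:ℝ) ≤ m := Nat.cast_nonneg m; linarith) (by linarith)
  linarith

end Aux

/-- Digamma sum bound: for `ν ≥ 0`, `0 < p`, `p - 1 < n` and `n - p - 2 > 0`,
`∑_{k=0}^{p-1} [ψ((n+ν-k)/2) - ψ((n-k)/2)] ≤ ∑_{k=0}^{p-1} log(1 + (ν+2)/(n-k-2))
≤ p log(1 + (ν+2)/(n-p-2))`, where `ψ = (log Γ)'` is the digamma function. -/
theorem stmt16 (n p : ℕ) (ν : ℝ) (hν : 0 ≤ ν) (hp : 0 < p) (hpn : p - 1 < n)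
    (hnp : (0 : ℝ) < (n : ℝ) - p - 2)
    (ψ : ℝ → ℝ) (hψ : ψ = deriv fun y => Real.log (Real.Gamma y)) :
    (∑ k ∈ Finset.range p, (ψ (((n : ℝ) + ν - k) / 2) - ψ (((n : ℝ) - k) / 2))
        ≤ ∑ k ∈ Finset.range p, Real.log (1 + (ν + 2) / ((n : ℝ) - k - 2))) ∧
    (∑ k ∈ Finset.range p, Real.log (1 + (ν + 2) / ((n : ℝ) - k - 2))
        ≤ p * Real.log (1 + (ν + 2) / ((n : ℝ) - p - 2))) := by
  subst hψ
  have hk2 : ∀ k ∈ Finset.range p, (0:ℝ) < (n : ℝ) - k - 2 := by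
    intro k hk
    have hk' : (k : ℝ) ≤ (p : ℝ) - 1 := by
      have := Finset.mem_range.mp hk
      have : (k : ℝ) + 1 ≤ p := by exact_mod_cast this
      linarith
    linarith
  constructor
  · apply Finset.sum_le_sum
    intro k hk
    have hk2' := hk2 k hk
    set a : ℝ := ((n : ℝ) - k) / 2 with ha_def
    have ha : 1 < a := by rw [ha_def]; linarith
    have e1 : ((n : ℝ) + ν - k) / 2 = a + ν / 2 := by rw [ha_def]; ring
    rw [e1]
    refine (term_bound a ν ha hν).trans (le_of_eq ?_)
    rw [← Real.log_div (by linarith : (0:ℝ) < a + ν / 2).ne' (by linarith : (0:ℝ) < a - 1).ne']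
    congr 1
    rw [ha_def]
    field_simp
    ring
  · have hterm : ∀ k ∈ Finset.range p,
        Real.log (1 + (ν + 2) / ((n : ℝ) - k - 2)) ≤
          Real.log (1 + (ν + 2) / ((n : ℝ) - p - 2)) := by
      intro k hk
      have hk2' := hk2 k hk
      apply Real.log_le_log (by positivity)
      have : (ν + 2) / ((n : ℝ) - k - 2) ≤ (ν + 2) / ((n : ℝ) - p - 2) := by
        apply div_le_div_of_nonneg_left (by linarith) hnp
        have : (k : ℝ) ≤ (p : ℝ) - 1 := by
          have := Finset.mem_range.mp hk
          have : (k : ℝ) + 1 ≤ p := by exact_mod_cast this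
          linarith
        linarith
      linarith
    calc ∑ k ∈ Finset.range p, Real.log (1 + (ν + 2) / ((n : ℝ) - k - 2))
        ≤ ∑ _k ∈ Finset.range p, Real.log (1 + (ν + 2) / ((n : ℝ) - p - 2)) :=
          Finset.sum_le_sum hterm
      _ = p * Real.log (1 + (ν + 2) / ((n : ℝ) - p - 2)) := by
          rw [Finset.sum_const, Finset.card_range, nsmul_eq_mul]
end
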